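/- arXiv:1807.01551 — 4 statements merged into one kernel-verified Lean document; each statement's English description precedes it below -/
import Mathlib

section
/- Let X be a simplicial complex on a vertex set V of size n with all missing faces of dimension at most d. Let k ≥ 0 and σ a k-dimensional simplex of X. Then the sum over the k−1 dimensional faces τ of σ of deg_X(τ), minus (k − d + 1)·deg_X(σ), is at most d·n − (d−1)(k+1). -/
open Matrix BigOperators

/-- A finite abstract simplicial complex on vertex type `V` (the empty face is included). -/
structure SC (V : Type) [DecidableEq V] where
  faces : Finset (Finset V)
  empty_mem : ∅ ∈ faces
  down_closed : ∀ σ ∈ faces, ∀ τ ⊆ σ, τ ∈ faces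

namespace SC

variable {V : Type} [Fintype V] [DecidableEq V] [LinearOrder V] (X : SC V)

/-- The degree of a simplex: the number of cofacets. -/
def deg (σ : Finset V) : ℕ :=
  (X.faces.filter fun η => σ ⊆ η ∧ η.card = σ.card + 1).card

/-- Faces with `m` vertices, i.e. of dimension `m - 1`. -/
abbrev face (m : ℕ) := {σ : Finset V // σ ∈ X.faces ∧ σ.card = m}

/-- `sgn σ τ` for `τ ⊆ σ` with `|σ \ τ| = 1`: the sign `(-1)^i` where `i` is the
position of the vertex of `σ \ τ` in the increasing ordering of `σ`. -/
def sgn (σ τ : Finset V) : ℝ :=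
  ∑ u ∈ σ \ τ, (-1 : ℝ) ^ (σ.filter fun w => w < u).card

/-- The matrix of the simplicial coboundary map from `(m-1)`-cochains to `m`-cochains
(cochains are indexed by the number of vertices of the faces). -/
def CB (m : ℕ) : Matrix (X.face (m + 1)) (X.face m) ℝ :=
  fun σ τ => if τ.1 ⊆ σ.1 then sgn σ.1 τ.1 else 0

/-- The reduced Laplacian `L_{m-1} = d_{m-2} ∂_{m-2} + ∂_{m-1} d_{m-1}` acting on
cochains supported on faces with `m` vertices. -/
def Lap : (m : ℕ) → Matrix (X.face m) (X.face m) ℝ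
  | 0 => (X.CB 0)ᵀ * X.CB 0
  | m + 1 => (X.CB (m + 1))ᵀ * X.CB (m + 1) + X.CB m * (X.CB m)ᵀ

/-- The set of eigenvalues of the reduced Laplacian `L_{m-1}`. -/
def eigenvals (m : ℕ) : Set ℝ :=
  {μ | Module.End.HasEigenvalue (Matrix.toLin' (X.Lap m)) μ}

/-- The spectrum of the reduced Laplacian `L_{m-1}` as a multiset (roots of the
characteristic polynomial with multiplicity). -/
noncomputable def spec (m : ℕ) : Multiset ℝ := (X.Lap m).charpoly.roots

/-- The set of degrees of faces with `m` vertices. -/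
def degSet (m : ℕ) : Set ℕ := {N | ∃ σ ∈ X.faces, σ.card = m ∧ X.deg σ = N}

/-- All missing faces of `X` have dimension at most `d` (at most `d + 1` vertices). -/
def MissingBnd (d : ℕ) : Prop :=
  ∀ σ : Finset V, σ ∉ X.faces → (∀ τ ⊂ σ, τ ∈ X.faces) → σ.card ≤ d + 1

/-- `X` is a clique (flag) complex: any set of pairwise connected vertices is a face. -/
def Flag : Prop :=
  ∀ σ : Finset V, (∀ u ∈ σ, ∀ v ∈ σ, ({u, v} : Finset V) ∈ X.faces) → σ ∈ X.faces

/-- `φ` is a coboundary (an element of the image of the coboundary map). -/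
def IsCobound : (m : ℕ) → (X.face m → ℝ) → Prop
  | 0, φ => φ = 0
  | m + 1, φ => ∃ ψ : X.face m → ℝ, (X.CB m).mulVec ψ = φ

/-- The reduced cohomology with real coefficients vanishes in dimension `m - 1`:
every cocycle is a coboundary. -/
def Hvanish (m : ℕ) : Prop :=
  ∀ φ : X.face m → ℝ, (X.CB m).mulVec φ = 0 → X.IsCobound m φ

end SC

/-!
Double counting: `∑_{u ∈ σ} deg(σ \ {u})` counts the pairs `(u, v)` with `v ∉ σ \ {u}` and
`(σ \ {u}) ∪ {v}` a face; those with `v ∈ σ` are the `k + 1` pairs `(u, u)`. A vertex `v ∉ σ`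
pairs with at most `|σ| = k + 1` vertices `u`, and with at most `d` when `σ ∪ {v}` is not a face,
since a missing face inside `σ ∪ {v}` has at most `d + 1` vertices, one of which is `v`, and
contains every `u` it pairs with. There are `deg σ` vertices of the first kind and
`n - (k + 1) - deg σ` of the second.
-/

open Finset

namespace SC

variable {V : Type} [DecidableEq V] (X : SC V)

lemma exists_missing_face_subset {η : Finset V} (hη : η ∉ X.faces) :
    ∃ ρ ⊆ η, ρ ∉ X.faces ∧ ∀ τ ⊂ ρ, τ ∈ X.faces := by
  obtain ⟨ρ, hρη, hρ⟩ := exists_minimal_le_of_wellFoundedLT (· ∉ X.faces) η hη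
  exact ⟨ρ, hρη, hρ.prop, fun τ hτ => not_not.1 (hρ.not_prop_of_lt hτ)⟩

lemma card_filter_insert_erase_mem_le {d : ℕ} (hmiss : X.MissingBnd d) {σ : Finset V}
    (hσ : σ ∈ X.faces) {v : V} (hv : v ∉ σ) (hins : insert v σ ∉ X.faces) :
    #{u ∈ σ | insert v (σ.erase u) ∈ X.faces} ≤ d := by
  obtain ⟨ρ, hρσ, hρ, hρmin⟩ := X.exists_missing_face_subset hins
  have hvρ : v ∈ ρ := by
    by_contra hvρ
    exact hρ (X.down_closed σ hσ ρ ((subset_insert_iff_of_notMem hvρ).1 hρσ))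
  have hsub : {u ∈ σ | insert v (σ.erase u) ∈ X.faces} ⊆ ρ.erase v := by
    intro u hu
    rw [mem_filter] at hu
    have huv : u ≠ v := ne_of_mem_of_not_mem hu.1 hv
    refine mem_erase.2 ⟨huv, ?_⟩
    by_contra huρ
    refine hρ (X.down_closed _ hu.2 ρ ?_)
    rw [← erase_insert_of_ne huv.symm]
    exact subset_erase.2 ⟨hρσ, huρ⟩
  calc #{u ∈ σ | insert v (σ.erase u) ∈ X.faces}
      ≤ #(ρ.erase v) := card_le_card hsub
    _ = #ρ - 1 := card_erase_of_mem hvρ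
    _ ≤ d := by have := hmiss ρ hρ hρmin; omega

variable [Fintype V]

lemma deg_eq_card_filter_insert (τ : Finset V) :
    X.deg τ = #{v ∈ τᶜ | insert v τ ∈ X.faces} := by
  refine (card_bij (fun v _ => insert v τ) ?_ ?_ ?_).symm
  · intro v hv
    simp only [mem_filter, mem_compl] at hv ⊢
    exact ⟨hv.2, subset_insert _ _, card_insert_of_notMem hv.1⟩
  · intro v hv w hw h
    simp only [mem_filter, mem_compl] at hv hw
    exact (insert_inj hv.1).1 h
  · intro η hη
    obtain ⟨hη, hτη, hcard⟩ := mem_filter.1 hη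
    obtain ⟨v, hvη, hvτ⟩ := exists_of_ssubset
      (ssubset_of_subset_of_ne hτη (by rintro rfl; omega))
    have hins : insert v τ = η :=
      eq_of_subset_of_card_le (insert_subset hvη hτη) (by rw [card_insert_of_notMem hvτ, hcard])
    exact ⟨v, by simp [hvτ, hins, hη], hins⟩

lemma deg_erase {σ : Finset V} (hσ : σ ∈ X.faces) {u : V} (hu : u ∈ σ) :
    X.deg (σ.erase u) = #{v ∈ σᶜ | insert v (σ.erase u) ∈ X.faces} + 1 := by
  rw [deg_eq_card_filter_insert, compl_erase, filter_insert, if_pos (by rwa [insert_erase hu]),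
    card_insert_of_notMem (by simp [hu])]

lemma sum_deg_erase_eq {σ : Finset V} (hσ : σ ∈ X.faces) :
    ∑ u ∈ σ, X.deg (σ.erase u) =
      ∑ v ∈ σᶜ, #{u ∈ σ | insert v (σ.erase u) ∈ X.faces} + #σ := by
  rw [sum_congr rfl fun u hu => X.deg_erase hσ hu, sum_add_distrib, sum_const, smul_eq_mul,
    mul_one]
  exact congrArg (· + #σ)
    (sum_card_bipartiteAbove_eq_sum_card_bipartiteBelow fun u v => insert v (σ.erase u) ∈ X.faces)

lemma sum_deg_erase_le {d : ℕ} (hmiss : X.MissingBnd d) {σ : Finset V} (hσ : σ ∈ X.faces) :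
    ∑ u ∈ σ, X.deg (σ.erase u) ≤
      #σ * X.deg σ + d * #{v ∈ σᶜ | insert v σ ∉ X.faces} + #σ := by
  have hterm : ∀ v ∈ σᶜ, #{u ∈ σ | insert v (σ.erase u) ∈ X.faces} ≤
      if insert v σ ∈ X.faces then #σ else d := by
    intro v hv
    split_ifs with hins
    · exact card_filter_le _ _
    · exact X.card_filter_insert_erase_mem_le hmiss hσ (mem_compl.1 hv) hins
  rw [X.sum_deg_erase_eq hσ, X.deg_eq_card_filter_insert σ]
  gcongr
  refine (sum_le_sum hterm).trans_eq ?_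
  rw [sum_ite, sum_const, sum_const, smul_eq_mul, smul_eq_mul, mul_comm, mul_comm d]

lemma deg_add_card_filter_insert_notMem (σ : Finset V) :
    X.deg σ + #{v ∈ σᶜ | insert v σ ∉ X.faces} = Fintype.card V - #σ := by
  rw [deg_eq_card_filter_insert, card_filter_add_card_filter_not, card_compl]

end SC

theorem sum_degrees_bound_general {V : Type} [Fintype V] [DecidableEq V]
    (X : SC V) (d : ℕ) (hmiss : X.MissingBnd d)
    (k : ℕ) (σ : Finset V) (hσ : σ ∈ X.faces) (hcard : σ.card = k + 1) :
    (∑ u ∈ σ, (X.deg (σ.erase u) : ℤ)) - ((k : ℤ) - (d : ℤ) + 1) * (X.deg σ : ℤ)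
      ≤ (d : ℤ) * (Fintype.card V : ℤ) - ((d : ℤ) - 1) * ((k : ℤ) + 1) := by
  have hsum := X.sum_deg_erase_le hmiss hσ
  have hsplit := X.deg_add_card_filter_insert_notMem σ
  have hσn : #σ ≤ Fintype.card V := card_le_univ σ
  rw [hcard] at hsum hsplit hσn
  set B := #{v ∈ σᶜ | insert v σ ∉ X.faces}
  have hB : (B : ℤ) = Fintype.card V - (k + 1) - X.deg σ := by omega
  have hsumZ : ∑ u ∈ σ, (X.deg (σ.erase u) : ℤ) ≤ (k + 1) * X.deg σ + d * B + (k + 1) := by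
    exact_mod_cast hsum
  rw [hB] at hsumZ
  linarith

/-- Degree-sum inequality: for a `k`-simplex `σ` of a complex with all
missing faces of dimension at most `d`,
`Σ_{τ ∈ σ(k-1)} deg(τ) - (k - d + 1)·deg(σ) ≤ d·n - (d-1)(k+1)`. -/
theorem sum_degrees_bound {V : Type} [Fintype V] [DecidableEq V] [LinearOrder V]
    (X : SC V) (hvert : ∀ v : V, {v} ∈ X.faces) (d : ℕ) (hmiss : X.MissingBnd d)
    (k : ℕ) (σ : Finset V) (hσ : σ ∈ X.faces) (hcard : σ.card = k + 1) :
    (∑ u ∈ σ, (X.deg (σ.erase u) : ℤ)) - ((k : ℤ) - (d : ℤ) + 1) * (X.deg σ : ℤ)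
      ≤ (d : ℤ) * (Fintype.card V : ℤ) - ((d : ℤ) - 1) * ((k : ℤ) + 1) :=
  sum_degrees_bound_general X d hmiss k σ hσ hcard
end

section
/- For a k-simplex σ in a finite simplicial complex X with vertex set V, the sum of absolute values of the off-diagonal entries of the reduced k-Laplacian L_k in row σ equals Σ_{τ ∈ σ(k−1)} deg_X(τ) − (k+1)(deg_X(σ) + 1). -/
open Matrix BigOperators

/-!
Off the diagonal, `L_k(σ, η)` is the sum of a down term, carried by the common facet `σ ∩ η`,
and an up term, carried by the common cofacet `σ ∪ η`; each is `±1` or `0`, and when the up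
term is present the two cancel. Hence off the diagonal `|L_k| = |B||B|ᵀ - |C|ᵀ|C|`, where
`|B|` and `|C|` are the `0/1` incidence matrices of the two coboundaries. The row sum of
`|B||B|ᵀ` at `σ` is `Σ_{τ ∈ σ(k-1)} deg τ` with diagonal entry `k + 1`, and that of `|C|ᵀ|C|`
is `(k + 2) deg σ` with diagonal entry `deg σ`.
-/

namespace Finset

variable {α : Type*} [DecidableEq α] {s t u : Finset α} {n : ℕ}

theorem eq_inter_of_subset_of_subset (hs : #s = n + 1) (ht : #t = n + 1) (hst : s ≠ t)
    (hus : u ⊆ s) (hut : u ⊆ t) (hu : #u = n) : u = s ∩ t := by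
  refine eq_of_subset_of_card_le (subset_inter hus hut) ?_
  by_contra! hlt
  have hs' : s ∩ t = s := eq_of_subset_of_card_le inter_subset_left (by omega)
  have ht' : s ∩ t = t := eq_of_subset_of_card_le inter_subset_right (by omega)
  exact hst (hs'.symm.trans ht')

theorem eq_union_of_subset_of_subset (hs : #s = n) (ht : #t = n) (hst : s ≠ t)
    (hsu : s ⊆ u) (htu : t ⊆ u) (hu : #u = n + 1) : u = s ∪ t := by
  refine (eq_of_subset_of_card_le (union_subset hsu htu) ?_).symm
  by_contra! hlt
  have hs' : s = s ∪ t := eq_of_subset_of_card_le subset_union_left (by omega)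
  have ht' : t = s ∪ t := eq_of_subset_of_card_le subset_union_right (by omega)
  exact hst (hs'.trans ht'.symm)

end Finset

theorem Fintype.abs_sum_of_support_subsingleton {ι M : Type*} [Fintype ι] [AddCommGroup M]
    [LinearOrder M] [IsOrderedAddMonoid M] {f : ι → M} (hf : (Function.support f).Subsingleton) :
    |∑ i, f i| = ∑ i, |f i| := by
  by_cases h : ∃ i, f i ≠ 0
  · obtain ⟨i, hi⟩ := h
    have hzero : ∀ j, j ≠ i → f j = 0 := fun j hj => by
      by_contra hj'
      exact hj (hf hj' hi)
    rw [Fintype.sum_eq_single i hzero,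
      Fintype.sum_eq_single i fun j hj => by rw [hzero j hj, abs_zero]]
  · push Not at h
    simp [h]

namespace SC

section Incidence

variable {V : Type} [DecidableEq V] (X : SC V) {m : ℕ}

def incidence (m : ℕ) : Matrix (X.face (m + 1)) (X.face m) ℝ :=
  fun σ τ => if τ.1 ⊆ σ.1 then 1 else 0

lemma incidence_mul_self (σ : X.face (m + 1)) (τ : X.face m) :
    X.incidence m σ τ * X.incidence m σ τ = X.incidence m σ τ := by
  unfold incidence
  split_ifs <;> simp

lemma common_facet_unique {σ η : X.face (m + 1)} (hne : σ ≠ η) {τ τ' : X.face m}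
    (hσ : τ.1 ⊆ σ.1) (hη : τ.1 ⊆ η.1) (hσ' : τ'.1 ⊆ σ.1) (hη' : τ'.1 ⊆ η.1) : τ = τ' := by
  have hne' : σ.1 ≠ η.1 := Subtype.val_injective.ne hne
  exact Subtype.ext <| (Finset.eq_inter_of_subset_of_subset σ.2.2 η.2.2 hne' hσ hη τ.2.2).trans
    (Finset.eq_inter_of_subset_of_subset σ.2.2 η.2.2 hne' hσ' hη' τ'.2.2).symm

lemma common_cofacet_unique {σ η : X.face m} (hne : σ ≠ η) {ρ ρ' : X.face (m + 1)}
    (hσ : σ.1 ⊆ ρ.1) (hη : η.1 ⊆ ρ.1) (hσ' : σ.1 ⊆ ρ'.1) (hη' : η.1 ⊆ ρ'.1) : ρ = ρ' := by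
  have hne' : σ.1 ≠ η.1 := Subtype.val_injective.ne hne
  exact Subtype.ext <| (Finset.eq_union_of_subset_of_subset σ.2.2 η.2.2 hne' hσ hη ρ.2.2).trans
    (Finset.eq_union_of_subset_of_subset σ.2.2 η.2.2 hne' hσ' hη' ρ'.2.2).symm

variable [Fintype V]

lemma incidence_row_sum_mul (σ : X.face (m + 1)) (f : Finset V → ℝ) :
    ∑ τ, X.incidence m σ τ * f τ.1 = ∑ u ∈ σ.1, f (σ.1.erase u) := by
  simp only [incidence, ite_mul, one_mul, zero_mul]
  rw [← Finset.sum_filter]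
  symm
  refine Finset.sum_bij (fun u hu => ⟨σ.1.erase u,
    X.down_closed _ σ.2.1 _ (Finset.erase_subset u _),
    by rw [Finset.card_erase_of_mem hu, σ.2.2, Nat.add_sub_cancel]⟩) ?_ ?_ ?_ (fun _ _ => rfl)
  · intro u hu
    simp [Finset.erase_subset]
  · intro u hu v hv huv
    exact Finset.erase_injOn σ.1 hu hv (congrArg Subtype.val huv)
  · intro τ hτ
    obtain ⟨u, hu, hσ⟩ := Finset.exists_eq_insert_iff.2
      ⟨(Finset.mem_filter.1 hτ).2, by rw [τ.2.2, σ.2.2]⟩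
    exact ⟨u, hσ ▸ Finset.mem_insert_self u _, Subtype.ext (by simp [← hσ, hu])⟩

lemma incidence_row_sum (σ : X.face (m + 1)) : ∑ τ, X.incidence m σ τ = m + 1 := by
  simpa [σ.2.2] using X.incidence_row_sum_mul σ 1

lemma incidence_col_sum (τ : X.face m) : ∑ σ, X.incidence m σ τ = X.deg τ.1 := by
  have hfaces : ∑ η ∈ X.faces.filter (·.card = m + 1), (if τ.1 ⊆ η then (1 : ℝ) else 0)
      = ∑ σ : X.face (m + 1), if τ.1 ⊆ σ.1 then 1 else 0 :=
    Finset.sum_subtype _ (fun η => Finset.mem_filter) _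
  simp only [incidence]
  rw [← hfaces, Finset.sum_boole, Finset.filter_filter, deg, τ.2.2]
  simp_rw [and_comm]

lemma incidence_mul_transpose_row_sum (σ : X.face (m + 1)) :
    ∑ η, (X.incidence m * (X.incidence m)ᵀ) σ η = ∑ u ∈ σ.1, (X.deg (σ.1.erase u) : ℝ) := by
  simp only [mul_apply, transpose_apply]
  rw [Finset.sum_comm]
  simp_rw [← Finset.mul_sum, incidence_col_sum]
  exact X.incidence_row_sum_mul σ fun s => (X.deg s : ℝ)

lemma transpose_incidence_mul_row_sum (σ : X.face m) :
    ∑ η, ((X.incidence m)ᵀ * X.incidence m) σ η = (m + 1) * X.deg σ.1 := by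
  simp only [mul_apply, transpose_apply]
  rw [Finset.sum_comm]
  simp_rw [← Finset.mul_sum, incidence_row_sum, ← Finset.sum_mul, incidence_col_sum, mul_comm]

lemma incidence_mul_transpose_diag (σ : X.face (m + 1)) :
    (X.incidence m * (X.incidence m)ᵀ) σ σ = m + 1 := by
  simp only [mul_apply, transpose_apply, incidence_mul_self, incidence_row_sum]

lemma transpose_incidence_mul_diag (σ : X.face m) :
    ((X.incidence m)ᵀ * X.incidence m) σ σ = X.deg σ.1 := by
  simp only [mul_apply, transpose_apply, incidence_mul_self, incidence_col_sum]

end Incidence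

section Sign

variable {V : Type} [DecidableEq V] [LinearOrder V]

lemma sgn_insert (τ : Finset V) {u : V} (hu : u ∉ τ) :
    sgn (insert u τ) τ = (-1 : ℝ) ^ (τ.filter (· < u)).card := by
  rw [sgn, Finset.insert_sdiff_cancel hu, Finset.sum_singleton, Finset.filter_insert,
    if_neg (lt_irrefl u)]

lemma abs_sgn_insert (τ : Finset V) {u : V} (hu : u ∉ τ) : |sgn (insert u τ) τ| = 1 := by
  rw [sgn_insert τ hu, abs_pow, abs_neg, abs_one, one_pow]

lemma sgn_insert_insert_mul (τ : Finset V) {u v : V} (hu : u ∉ τ) (hv : v ∉ τ) (huv : u ≠ v) :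
    sgn (insert u (insert v τ)) (insert u τ) * sgn (insert u (insert v τ)) (insert v τ)
      = -(sgn (insert u τ) τ * sgn (insert v τ) τ) := by
  have hu' : u ∉ insert v τ := by simp [huv, hu]
  have hv' : v ∉ insert u τ := by simp [huv.symm, hv]
  rw [Finset.insert_comm u v τ, sgn_insert _ hv', ← Finset.insert_comm u v τ, sgn_insert _ hu',
    sgn_insert τ hu, sgn_insert τ hv, Finset.filter_insert, Finset.filter_insert]
  rcases lt_or_gt_of_ne huv with h | h
  · rw [if_neg (not_lt.2 h.le), if_pos h, Finset.card_insert_of_notMem (by simp [hu]), pow_succ]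
    ring
  · rw [if_pos h, if_neg (not_lt.2 h.le), Finset.card_insert_of_notMem (by simp [hv]), pow_succ]
    ring

lemma sgn_inter_mul_sgn_inter {s t r : Finset V} {n : ℕ} (hs : s.card = n + 1)
    (ht : t.card = n + 1) (hst : s ≠ t) (hsr : s ⊆ r) (htr : t ⊆ r) (hr : r.card = n + 2) :
    sgn s (s ∩ t) * sgn t (s ∩ t) = -(sgn r s * sgn r t) := by
  have hr' : r = s ∪ t := Finset.eq_union_of_subset_of_subset hs ht hst hsr htr hr
  obtain ⟨c, hc⟩ : ∃ c, c = s ∩ t := ⟨_, rfl⟩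
  have hcard : c.card = n := by
    have := Finset.card_inter_add_card_union s t
    rw [← hc, ← hr', hr] at this
    omega
  obtain ⟨u, hu, rfl⟩ := Finset.exists_eq_insert_iff.2
    ⟨hc ▸ Finset.inter_subset_left, by rw [hcard, hs]⟩
  obtain ⟨v, hv, rfl⟩ := Finset.exists_eq_insert_iff.2
    ⟨hc ▸ Finset.inter_subset_right, by rw [hcard, ht]⟩
  have huv : u ≠ v := by
    rintro rfl
    exact hst rfl
  rw [← hc, hr', Finset.insert_union, Finset.union_insert, Finset.union_self,
    sgn_insert_insert_mul c hu hv huv, neg_neg]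

variable (X : SC V) {m : ℕ}

lemma CB_of_subset {σ : X.face (m + 1)} {τ : X.face m} (h : τ.1 ⊆ σ.1) :
    X.CB m σ τ = sgn σ.1 τ.1 :=
  if_pos h

lemma subset_of_CB_ne_zero {σ : X.face (m + 1)} {τ : X.face m} (h : X.CB m σ τ ≠ 0) :
    τ.1 ⊆ σ.1 := by
  by_contra hs
  exact h (if_neg hs)

lemma abs_CB (σ : X.face (m + 1)) (τ : X.face m) : |X.CB m σ τ| = X.incidence m σ τ := by
  unfold CB incidence
  split_ifs with h
  · obtain ⟨u, hu, hσ⟩ := Finset.exists_eq_insert_iff.2 ⟨h, by rw [τ.2.2, σ.2.2]⟩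
    rw [← hσ, abs_sgn_insert _ hu]
  · exact abs_zero

end Sign

section Laplacian

variable {V : Type} [Fintype V] [DecidableEq V] [LinearOrder V] (X : SC V) {m : ℕ}

lemma abs_CB_mul_transpose_apply {σ η : X.face (m + 1)} (hne : σ ≠ η) :
    |(X.CB m * (X.CB m)ᵀ) σ η| = (X.incidence m * (X.incidence m)ᵀ) σ η := by
  simp only [mul_apply, transpose_apply]
  rw [Fintype.abs_sum_of_support_subsingleton]
  · simp only [abs_mul, abs_CB]
  · intro τ hτ τ' hτ'
    obtain ⟨hσ, hη⟩ := mul_ne_zero_iff.1 hτ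
    obtain ⟨hσ', hη'⟩ := mul_ne_zero_iff.1 hτ'
    exact X.common_facet_unique hne (X.subset_of_CB_ne_zero hσ) (X.subset_of_CB_ne_zero hη)
      (X.subset_of_CB_ne_zero hσ') (X.subset_of_CB_ne_zero hη')

lemma abs_transpose_CB_mul_apply {σ η : X.face m} (hne : σ ≠ η) :
    |((X.CB m)ᵀ * X.CB m) σ η| = ((X.incidence m)ᵀ * X.incidence m) σ η := by
  simp only [mul_apply, transpose_apply]
  rw [Fintype.abs_sum_of_support_subsingleton]
  · simp only [abs_mul, abs_CB]
  · intro ρ hρ ρ' hρ'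
    obtain ⟨hσ, hη⟩ := mul_ne_zero_iff.1 hρ
    obtain ⟨hσ', hη'⟩ := mul_ne_zero_iff.1 hρ'
    exact X.common_cofacet_unique hne (X.subset_of_CB_ne_zero hσ) (X.subset_of_CB_ne_zero hη)
      (X.subset_of_CB_ne_zero hσ') (X.subset_of_CB_ne_zero hη')

lemma CB_mul_transpose_apply_of_subset {σ η : X.face (m + 1)} (hne : σ ≠ η) {τ : X.face m}
    (hσ : τ.1 ⊆ σ.1) (hη : τ.1 ⊆ η.1) :
    (X.CB m * (X.CB m)ᵀ) σ η = sgn σ.1 τ.1 * sgn η.1 τ.1 := by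
  simp only [mul_apply, transpose_apply]
  rw [Fintype.sum_eq_single τ, X.CB_of_subset hσ, X.CB_of_subset hη]
  intro τ' hτ'
  by_contra h
  obtain ⟨hσ', hη'⟩ := mul_ne_zero_iff.1 h
  exact hτ' (X.common_facet_unique hne (X.subset_of_CB_ne_zero hσ') (X.subset_of_CB_ne_zero hη')
    hσ hη)

lemma transpose_CB_mul_apply_of_subset {σ η : X.face m} (hne : σ ≠ η) {ρ : X.face (m + 1)}
    (hσ : σ.1 ⊆ ρ.1) (hη : η.1 ⊆ ρ.1) :
    ((X.CB m)ᵀ * X.CB m) σ η = sgn ρ.1 σ.1 * sgn ρ.1 η.1 := by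
  simp only [mul_apply, transpose_apply]
  rw [Fintype.sum_eq_single ρ, X.CB_of_subset hσ, X.CB_of_subset hη]
  intro ρ' hρ'
  by_contra h
  obtain ⟨hσ', hη'⟩ := mul_ne_zero_iff.1 h
  exact hρ' (X.common_cofacet_unique hne (X.subset_of_CB_ne_zero hσ') (X.subset_of_CB_ne_zero hη')
    hσ hη)

lemma CB_mul_transpose_apply_eq_neg {σ η : X.face (m + 1)} (hne : σ ≠ η)
    (h : ((X.CB (m + 1))ᵀ * X.CB (m + 1)) σ η ≠ 0) :
    (X.CB m * (X.CB m)ᵀ) σ η = -((X.CB (m + 1))ᵀ * X.CB (m + 1)) σ η := by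
  obtain ⟨ρ, -, hρ⟩ := Finset.exists_ne_zero_of_sum_ne_zero h
  obtain ⟨hσρ, hηρ⟩ := mul_ne_zero_iff.1 hρ
  replace hσρ := X.subset_of_CB_ne_zero hσρ
  replace hηρ := X.subset_of_CB_ne_zero hηρ
  have hne' : σ.1 ≠ η.1 := Subtype.val_injective.ne hne
  have hcard : (σ.1 ∩ η.1).card = m := by
    have := Finset.card_inter_add_card_union σ.1 η.1
    rw [← Finset.eq_union_of_subset_of_subset σ.2.2 η.2.2 hne' hσρ hηρ ρ.2.2, ρ.2.2, σ.2.2,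
      η.2.2] at this
    omega
  let τ : X.face m := ⟨σ.1 ∩ η.1, X.down_closed _ σ.2.1 _ Finset.inter_subset_left, hcard⟩
  rw [X.CB_mul_transpose_apply_of_subset hne (τ := τ) Finset.inter_subset_left
    Finset.inter_subset_right, X.transpose_CB_mul_apply_of_subset hne hσρ hηρ,
    sgn_inter_mul_sgn_inter σ.2.2 η.2.2 hne' hσρ hηρ ρ.2.2]

lemma abs_Lap_apply_of_ne {σ η : X.face (m + 1)} (hne : σ ≠ η) :
    |X.Lap (m + 1) σ η| = (X.incidence m * (X.incidence m)ᵀ) σ η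
      - ((X.incidence (m + 1))ᵀ * X.incidence (m + 1)) σ η := by
  rw [← X.abs_CB_mul_transpose_apply hne, ← X.abs_transpose_CB_mul_apply hne, Lap,
    Matrix.add_apply]
  by_cases hup : ((X.CB (m + 1))ᵀ * X.CB (m + 1)) σ η = 0
  · rw [hup, zero_add, abs_zero, sub_zero]
  · rw [X.CB_mul_transpose_apply_eq_neg hne hup, add_neg_cancel, abs_zero, abs_neg, sub_self]

end Laplacian

end SC

theorem offdiagonal_abs_sum_general {V : Type} [Fintype V] [DecidableEq V] [LinearOrder V]
    (X : SC V) (m : ℕ) (σ : X.face m) :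
    ∑ η ∈ Finset.univ.erase σ, |X.Lap m σ η|
      = (∑ u ∈ σ.1, (X.deg (σ.1.erase u) : ℝ)) - (m : ℝ) * ((X.deg σ.1 : ℝ) + 1) := by
  rcases m with _ | k
  · have hσ : σ.1 = ∅ := Finset.card_eq_zero.1 σ.2.2
    rw [hσ, Finset.sum_empty, Nat.cast_zero, zero_mul, sub_zero]
    refine Finset.sum_eq_zero fun η hη => absurd (Subtype.ext ?_) (Finset.ne_of_mem_erase hη)
    rw [hσ, Finset.card_eq_zero.1 η.2.2]
  · rw [Finset.sum_congr rfl fun η hη => X.abs_Lap_apply_of_ne (Finset.ne_of_mem_erase hη).symm,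
      Finset.sum_sub_distrib, Finset.sum_erase_eq_sub (Finset.mem_univ σ),
      Finset.sum_erase_eq_sub (Finset.mem_univ σ), X.incidence_mul_transpose_row_sum,
      X.transpose_incidence_mul_row_sum, X.incidence_mul_transpose_diag,
      X.transpose_incidence_mul_diag]
    push_cast
    ring

/-- The sum of absolute values of the off-diagonal entries of the
reduced `k`-Laplacian in row `σ` equals
`Σ_{τ ∈ σ(k-1)} deg(τ) - (k+1)(deg(σ) + 1)` (here `k = m - 1 ≥ 0`). -/
theorem offdiagonal_abs_sum {V : Type} [Fintype V] [DecidableEq V] [LinearOrder V]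
    (X : SC V) (m : ℕ) (hm : 1 ≤ m) (σ : X.face m) :
    ∑ η ∈ Finset.univ.erase σ, |X.Lap m σ η|
      = (∑ u ∈ σ.1, (X.deg (σ.1.erase u) : ℝ)) - (m : ℝ) * ((X.deg σ.1 : ℝ) + 1) :=
  offdiagonal_abs_sum_general X m σ
end

section
/- Let X be a clique complex on n vertices, k ≥ 0, and σ_0 a k-simplex of X with deg_X(σ_0) = 0 and Σ_{τ ∈ σ_0(k−1)} deg_X(τ) = n. Then for every vertex v ∉ σ_0 there is exactly one vertex u ∈ σ_0 with {u,v} not an edge of X. -/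
open Matrix BigOperators

/-!
For a vertex `w`, count the facets `τ` of `σ₀` for which `τ ∪ {w}` is a cofacet of `τ`; double
counting shows these counts sum over all `w` to `∑_τ deg τ = n`. Each count is at most one: for
`w ∈ σ₀` only `τ = σ₀ ∖ {w}` qualifies, and for `w ∉ σ₀` two such facets would make `w` adjacent
to all of `σ₀`, so by flagness `σ₀ ∪ {w}` would be a cofacet of `σ₀`. Hence every count is one.
For `v ∉ σ₀` this means `v` is adjacent to all of `σ₀` but one vertex `u₀`, and `u₀` is not a
neighbour since `deg σ₀ = 0`.
-/

open Finset

namespace SC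

variable {V : Type} [DecidableEq V] (X : SC V)

def extendableFacetCount (σ : Finset V) (w : V) : ℕ :=
  #{u ∈ σ | w ∉ σ.erase u ∧ insert w (σ.erase u) ∈ X.faces}

variable {X}

lemma pair_mem_of_insert_mem {σ : Finset V} {u w : V} (h : insert w σ ∈ X.faces) (hu : u ∈ σ) :
    ({u, w} : Finset V) ∈ X.faces :=
  X.down_closed _ h _ (by simp [insert_subset_iff, hu])

lemma insert_notMem_of_deg_eq_zero {σ : Finset V} {w : V} (hdeg : X.deg σ = 0)
    (hw : w ∉ σ) : insert w σ ∉ X.faces := by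
  intro h
  have hcofacet : insert w σ ∈ X.faces.filter fun η => σ ⊆ η ∧ η.card = σ.card + 1 :=
    mem_filter.2 ⟨h, subset_insert _ _, card_insert_of_notMem hw⟩
  rw [deg, card_eq_zero] at hdeg
  simp [hdeg] at hcofacet

lemma Flag.insert_mem (hflag : X.Flag) {σ : Finset V} {w : V} (hσ : σ ∈ X.faces)
    (hw : {w} ∈ X.faces) (hadj : ∀ u ∈ σ, ({u, w} : Finset V) ∈ X.faces) :
    insert w σ ∈ X.faces := by
  refine hflag _ fun x hx y hy => ?_
  rcases mem_insert.1 hx with rfl | hxσ <;> rcases mem_insert.1 hy with rfl | hyσ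
  · simpa using hw
  · simpa [pair_comm] using hadj y hyσ
  · exact hadj x hxσ
  · exact X.down_closed σ hσ _ (by simp [insert_subset_iff, hxσ, hyσ])

lemma deg_eq_card_filter [Fintype V] (τ : Finset V) :
    X.deg τ = #{w | w ∉ τ ∧ insert w τ ∈ X.faces} := by
  symm
  refine card_bij (fun w _ => insert w τ) ?_ ?_ ?_
  · intro w hw
    simp only [mem_filter, mem_univ, true_and] at hw
    exact mem_filter.2 ⟨hw.2, subset_insert _ _, card_insert_of_notMem hw.1⟩
  · intro a ha b _ hab
    simp only [mem_filter, mem_univ, true_and] at ha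
    exact (mem_insert.1 (hab ▸ mem_insert_self a τ)).resolve_right ha.1
  · intro η hη
    obtain ⟨hη, hsub, hcard⟩ := mem_filter.1 hη
    obtain ⟨w, hw⟩ := card_eq_one.1 (by rw [card_sdiff_of_subset hsub, hcard]; omega :
      #(η \ τ) = 1)
    have hwτ : w ∉ τ := (mem_sdiff.1 (hw ▸ mem_singleton_self w)).2
    have hinsert : insert w τ = η := by
      rw [insert_eq, ← hw, sdiff_union_of_subset hsub]
    exact ⟨w, by simp [hwτ, hinsert, hη], hinsert⟩

lemma sum_deg_erase_eq_sum_extendableFacetCount [Fintype V] (σ : Finset V) :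
    ∑ u ∈ σ, X.deg (σ.erase u) = ∑ w, X.extendableFacetCount σ w := by
  simp only [extendableFacetCount, deg_eq_card_filter, card_filter]
  exact sum_comm

lemma extendableFacetCount_le_one (hflag : X.Flag) {σ : Finset V}
    (hσ : σ ∈ X.faces) (hdeg : X.deg σ = 0) (w : V) : X.extendableFacetCount σ w ≤ 1 := by
  refine card_le_one.2 fun a ha b hb => ?_
  simp only [mem_filter] at ha hb
  by_cases hwσ : w ∈ σ
  · have hwa : a = w := by_contra fun h => ha.2.1 (mem_erase.2 ⟨Ne.symm h, hwσ⟩)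
    have hwb : b = w := by_contra fun h => hb.2.1 (mem_erase.2 ⟨Ne.symm h, hwσ⟩)
    rw [hwa, hwb]
  · by_contra hab
    have hadj : ∀ x ∈ σ, ({x, w} : Finset V) ∈ X.faces := fun x hx => by
      by_cases hxa : x = a
      · exact pair_mem_of_insert_mem hb.2.2 (mem_erase.2 ⟨hxa ▸ hab, hx⟩)
      · exact pair_mem_of_insert_mem ha.2.2 (mem_erase.2 ⟨hxa, hx⟩)
    have hw : {w} ∈ X.faces := X.down_closed _ ha.2.2 _ (by simp)
    exact insert_notMem_of_deg_eq_zero hdeg hwσ (hflag.insert_mem hσ hw hadj)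

lemma existsUnique_pair_notMem (hflag : X.Flag) {σ : Finset V} {u₀ v : V}
    (hσ : σ ∈ X.faces) (hdeg : X.deg σ = 0) (hv : v ∉ σ) (hv₁ : {v} ∈ X.faces)
    (hu₀ : insert v (σ.erase u₀) ∈ X.faces) :
    ∃! u : V, u ∈ σ ∧ ({u, v} : Finset V) ∉ X.faces := by
  have hadj : ∀ x ∈ σ, x ≠ u₀ → ({x, v} : Finset V) ∈ X.faces := fun x hx hxu₀ =>
    pair_mem_of_insert_mem hu₀ (mem_erase.2 ⟨hxu₀, hx⟩)
  obtain ⟨u, huσ, hu⟩ : ∃ u ∈ σ, ({u, v} : Finset V) ∉ X.faces := by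
    by_contra! h
    exact insert_notMem_of_deg_eq_zero hdeg hv (hflag.insert_mem hσ hv₁ h)
  have huu₀ : u = u₀ := by_contra fun h => hu (hadj u huσ h)
  exact ⟨u, ⟨huσ, hu⟩, fun y ⟨hyσ, hy⟩ => huu₀ ▸ by_contra fun h => hy (hadj y hyσ h)⟩

end SC

theorem clique_unique_nonneighbor_general {V : Type} [Fintype V] [DecidableEq V]
    (X : SC V) (hflag : X.Flag) (hvert : ∀ v : V, {v} ∈ X.faces)
    (σ₀ : Finset V) (hσ : σ₀ ∈ X.faces)
    (hdeg : X.deg σ₀ = 0)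
    (hsum : ∑ u ∈ σ₀, X.deg (σ₀.erase u) = Fintype.card V) :
    ∀ v : V, v ∉ σ₀ → ∃! u : V, u ∈ σ₀ ∧ ({u, v} : Finset V) ∉ X.faces := by
  intro v hv
  have hle := SC.extendableFacetCount_le_one hflag hσ hdeg
  have hone : X.extendableFacetCount σ₀ v = 1 := by
    have hsum' : ∑ w, X.extendableFacetCount σ₀ w = ∑ _w : V, 1 := by
      rw [← SC.sum_deg_erase_eq_sum_extendableFacetCount, hsum, sum_const, card_univ, smul_eq_mul,
        mul_one]
    exact (sum_eq_sum_iff_of_le fun w _ => hle w).1 hsum' v (mem_univ v)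
  obtain ⟨u₀, hu₀⟩ := card_pos.1 (hone ▸ Nat.one_pos : 0 < X.extendableFacetCount σ₀ v)
  exact SC.existsUnique_pair_notMem hflag hσ hdeg hv (hvert v) (mem_filter.1 hu₀).2.2

/-- Let `X` be a clique complex on `n` vertices and `σ₀` a
`k`-simplex with `deg(σ₀) = 0` and `Σ_{τ ∈ σ₀(k-1)} deg(τ) = n`. Then every vertex
`v ∉ σ₀` has exactly one vertex `u ∈ σ₀` with `{u, v}` not an edge of `X`. -/
theorem clique_unique_nonneighbor {V : Type} [Fintype V] [DecidableEq V] [LinearOrder V]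
    (X : SC V) (hflag : X.Flag) (hvert : ∀ v : V, {v} ∈ X.faces)
    (k : ℕ) (σ₀ : Finset V) (hσ : σ₀ ∈ X.faces) (hcard : σ₀.card = k + 1)
    (hdeg : X.deg σ₀ = 0)
    (hsum : ∑ u ∈ σ₀, X.deg (σ₀.erase u) = Fintype.card V) :
    ∀ v : V, v ∉ σ₀ → ∃! u : V, u ∈ σ₀ ∧ ({u, v} : Finset V) ∉ X.faces :=
  clique_unique_nonneighbor_general X hflag hvert σ₀ hσ hdeg hsum
end

section
/- For k ≥ 0, the reduced k-Laplacian of a finite simplicial complex X decomposes as L_k = D_k + K_k, where K_k is a positive semi-definite matrix (the Bochner/signed-graph Laplacian) and D_k is the diagonal matrix with entries D_k(σ,σ) = 2(k+1) + (k+2)·deg_X(σ) − Σ_{τ ∈ σ(k−1)} deg_X(τ). -/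
open Matrix BigOperators

/-!
Write `L_k = B Bᵀ + Aᵀ A`, where `B` is the coboundary into and `A` the coboundary out of the
`k`-cochains. Off the diagonal both products vanish unless `σ` and `τ` share a `(k-1)`-face `ρ`.
If moreover `σ ∪ τ ∈ X`, the two contributions cancel (`d ∘ d = 0` on `σ ∪ τ`); otherwise only
`sign(σ, ρ) · sign(τ, ρ)` survives, which is the entry of `K_k` at the edge `στ` of `G_k`.
On the diagonal `L_k(σ, σ) = deg σ + (k + 1)`. The sum `∑_{u ∈ σ} deg (σ \ u)` counts `σ`
itself `k + 1` times and every other `k`-face `τ` through a facet of `σ` once; those `τ` with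
`σ ∪ τ ∈ X` come `k + 1` per cofacet of `σ`, and the others are the neighbours of `σ` in `G_k`.
So the sum is `(k + 1) + (k + 1) deg σ + deg_{G_k} σ`, which is the diagonal of `L_k = D_k + K_k`.
Finally `2 K_k = H Hᵀ` for the incidence matrix `H` indexed by ordered edges, so `K_k` is
positive semidefinite.
-/

namespace Finset

variable {α : Type*} [DecidableEq α] {s t : Finset α}

theorem covBy_iff_subset_and_card : s ⋖ t ↔ s ⊆ t ∧ s.card + 1 = t.card :=
  covBy_iff_exists_insert.trans exists_eq_insert_iff

theorem card_lt_card_union_of_ne (hst : s ≠ t) (hcard : s.card = t.card) :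
    s.card < (s ∪ t).card := by
  refine card_lt_card (ssubset_iff_subset_ne.2 ⟨subset_union_left, fun h => hst ?_⟩)
  have hts : t ⊆ s := h ▸ subset_union_right
  exact (eq_of_subset_of_card_le hts hcard.le).symm

theorem card_inter_lt_of_ne (hst : s ≠ t) (hcard : s.card = t.card) : (s ∩ t).card < s.card := by
  have := card_union_add_card_inter s t
  have := card_lt_card_union_of_ne hst hcard
  omega

end Finset

namespace SimpleGraph

variable {ι : Type*} [Fintype ι] [DecidableEq ι] (G : SimpleGraph ι) [DecidableRel G.Adj]
  (s : ι → ι → ℝ)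

/-- Columns are indexed by ordered pairs, so every edge occurs twice; `s i j` is the coefficient
of the end `i` of the edge `ij`. -/
def signedIncMatrix : Matrix ι (ι × ι) ℝ := fun i e =>
  if G.Adj e.1 e.2 then (if i = e.1 then s e.1 e.2 else 0) + (if i = e.2 then s e.2 e.1 else 0)
  else 0

/-- For `s = ±1` this is the Laplacian of `G` signed by `φ i j = - s i j * s j i`. -/
def signedLapMatrix : Matrix ι ι ℝ :=
  diagonal (fun i => ∑ j, if G.Adj i j then s i j ^ 2 else 0) +
    of fun i j => if G.Adj i j then s i j * s j i else 0

theorem signedIncMatrix_mul_transpose :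
    G.signedIncMatrix s * (G.signedIncMatrix s)ᵀ = (2 : ℝ) • G.signedLapMatrix s := by
  ext i j
  simp only [mul_apply, transpose_apply, Matrix.smul_apply, signedLapMatrix, Matrix.add_apply,
    of_apply]
  rcases eq_or_ne i j with rfl | hij
  · have h (a b : ι) : G.signedIncMatrix s i (a, b) * G.signedIncMatrix s i (a, b) =
        (if a = i then if G.Adj i b then s i b ^ 2 else 0 else 0) +
          (if b = i then if G.Adj i a then s i a ^ 2 else 0 else 0) := by
      unfold signedIncMatrix
      by_cases hab : G.Adj a b
      · grind [hab.ne, G.adj_comm]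
      · grind [G.adj_comm]
    simp only [h, Finset.sum_add_distrib, Fintype.sum_prod_type, Finset.sum_ite_irrel,
      Finset.sum_const_zero, Finset.sum_ite_eq', Finset.mem_univ, if_true, diagonal_apply_eq,
      SimpleGraph.irrefl, if_false, add_zero, smul_eq_mul]
    ring
  · rw [Fintype.sum_eq_add (i, j) (j, i) (by simp [hij])]
    · simp only [signedIncMatrix, if_true, if_false, hij, hij.symm, add_zero, zero_add, mul_ite,
        ite_mul, zero_mul, mul_zero, G.adj_comm j i, diagonal_apply_ne _ hij, smul_eq_mul]
      split_ifs <;> ring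
    · rintro ⟨a, b⟩ ⟨h₁, h₂⟩
      simp only [signedIncMatrix]
      grind

theorem posSemidef_signedLapMatrix : (G.signedLapMatrix s).PosSemidef := by
  have h := (posSemidef_self_mul_conjTranspose (G.signedIncMatrix s)).smul
    (show (0 : ℝ) ≤ 1 / 2 by norm_num)
  rwa [conjTranspose_eq_transpose_of_trivial, signedIncMatrix_mul_transpose, smul_smul,
    one_div_mul_cancel two_ne_zero, one_smul] at h

end SimpleGraph

namespace SC

section Combinatorics

variable {V : Type} [DecidableEq V] (X : SC V)

def cofacets (σ : Finset V) : Finset (Finset V) :=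
  X.faces.filter fun η => σ ⊆ η ∧ η.card = σ.card + 1

def lowerNeighbors (n : ℕ) (σ : Finset V) : Finset (Finset V) :=
  X.faces.filter fun τ => τ.card = n + 1 ∧ (σ ∩ τ).card = n

/-- The graph `G_n` on the faces with `n + 1` vertices. -/
def signedGraph (n : ℕ) : SimpleGraph (X.face (n + 1)) where
  Adj σ τ := (σ.1 ∩ τ.1).card = n ∧ σ.1 ∪ τ.1 ∉ X.faces
  symm.symm _ _ h := by rwa [Finset.inter_comm, Finset.union_comm]
  loopless.irrefl σ h := by simp [σ.2.2] at h

instance (n : ℕ) : DecidableRel (X.signedGraph n).Adj := fun _ _ =>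
  inferInstanceAs (Decidable (_ ∧ _))

theorem sum_face_eq_sum_filter [Fintype V] {M : Type*} [AddCommMonoid M] (k : ℕ)
    (f : Finset V → M) : ∑ η : X.face k, f η.1 = ∑ η ∈ X.faces with η.card = k, f η :=
  (Finset.sum_subtype _ (by simp) f).symm

theorem filter_subset_eq_powersetCard {σ : Finset V} (hσ : σ ∈ X.faces) (k : ℕ) :
    {ρ ∈ X.faces | ρ.card = k ∧ ρ ⊆ σ} = σ.powersetCard k := by
  ext ρ
  simp only [Finset.mem_filter, Finset.mem_powersetCard]
  exact ⟨fun h => ⟨h.2.2, h.2.1⟩, fun h => ⟨X.down_closed σ hσ ρ h.1, h.2, h.1⟩⟩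

variable {X} {n : ℕ} {σ : Finset V}

theorem cofacets_erase_eq_insert (hσX : σ ∈ X.faces) (hσ : σ.card = n + 1) {u : V} (hu : u ∈ σ) :
    X.cofacets (σ.erase u) = insert σ ((X.lowerNeighbors n σ).filter (σ ∩ · = σ.erase u)) := by
  have hu' : (σ.erase u).card = n := by rw [Finset.card_erase_of_mem hu, hσ]; rfl
  ext τ
  simp only [cofacets, lowerNeighbors, Finset.mem_filter, Finset.mem_insert, hu']
  constructor
  · rintro ⟨hτX, hsub, hτ⟩
    refine or_iff_not_imp_left.2 fun hτσ => ?_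
    have hlt := Finset.card_inter_lt_of_ne (Ne.symm hτσ) (hσ.trans hτ.symm)
    have heq := Finset.eq_of_subset_of_card_le
      (Finset.subset_inter (Finset.erase_subset u σ) hsub) (by omega)
    exact ⟨⟨hτX, hτ, by rw [← heq, hu']⟩, heq.symm⟩
  · rintro (rfl | ⟨⟨hτX, hτ, -⟩, heq⟩)
    · exact ⟨hσX, Finset.erase_subset u τ, hσ⟩
    · exact ⟨hτX, heq ▸ Finset.inter_subset_right, hτ⟩

theorem sum_deg_erase_eq_card_lowerNeighbors (hσX : σ ∈ X.faces) (hσ : σ.card = n + 1) :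
    ∑ u ∈ σ, X.deg (σ.erase u) = (X.lowerNeighbors n σ).card + (n + 1) := by
  set N := X.lowerNeighbors n σ
  have hmaps : Set.MapsTo (σ ∩ ·) N (σ.image σ.erase) := by
    intro τ hτ
    have hcov : σ ∩ τ ⋖ σ := Finset.covBy_iff_subset_and_card.2
      ⟨Finset.inter_subset_left, by rw [(Finset.mem_filter.1 hτ).2.2, hσ]⟩
    obtain ⟨a, ha, h⟩ := hcov.exists_finset_erase
    exact Finset.mem_image.2 ⟨a, ha, h⟩
  have hσN (u : V) (hu : u ∈ σ) : σ ∉ N.filter (σ ∩ · = σ.erase u) := fun h => by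
    rw [Finset.mem_filter, Finset.inter_self] at h
    exact Finset.erase_eq_self.1 h.2.symm hu
  calc ∑ u ∈ σ, X.deg (σ.erase u) = ∑ u ∈ σ, ((N.filter (σ ∩ · = σ.erase u)).card + 1) :=
        Finset.sum_congr rfl fun u hu => by
          rw [deg, ← cofacets, cofacets_erase_eq_insert hσX hσ hu,
            Finset.card_insert_of_notMem (hσN u hu)]
    _ = ∑ ρ ∈ σ.image σ.erase, (N.filter (σ ∩ · = ρ)).card + (n + 1) := by
        rw [Finset.sum_add_distrib, Finset.sum_image (Finset.erase_injOn σ)]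
        simp [hσ]
    _ = N.card + (n + 1) := by rw [← Finset.card_eq_sum_card_fiberwise hmaps]

theorem filter_union_eq_erase_powersetCard (hσ : σ.card = n + 1) {η : Finset V}
    (hη : η ∈ X.cofacets σ) :
    ((X.lowerNeighbors n σ).filter (σ ∪ · ∈ X.faces)).filter (σ ∪ · = η) =
      (η.powersetCard (n + 1)).erase σ := by
  obtain ⟨hηX, hση, hη⟩ := Finset.mem_filter.1 hη
  ext τ
  simp only [lowerNeighbors, Finset.mem_filter, Finset.mem_erase, Finset.mem_powersetCard]
  constructor
  · rintro ⟨⟨⟨-, hτ, hστ⟩, -⟩, rfl⟩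
    refine ⟨fun h => ?_, Finset.subset_union_right, hτ⟩
    rw [h, Finset.inter_self, hσ] at hστ
    omega
  · rintro ⟨hτσ, hτη, hτ⟩
    have hlt := Finset.card_lt_card_union_of_ne (Ne.symm hτσ) (hσ.trans hτ.symm)
    have heq := Finset.eq_of_subset_of_card_le (Finset.union_subset hση hτη) (by omega)
    have := Finset.card_union_add_card_inter σ τ
    rw [heq] at this
    exact ⟨⟨⟨X.down_closed η hηX τ hτη, hτ, by omega⟩, heq ▸ hηX⟩, heq⟩

theorem card_lowerNeighbors_filter_union_mem (hσ : σ.card = n + 1) :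
    ((X.lowerNeighbors n σ).filter (σ ∪ · ∈ X.faces)).card = (n + 1) * X.deg σ := by
  have hmaps : Set.MapsTo (σ ∪ ·) ((X.lowerNeighbors n σ).filter (σ ∪ · ∈ X.faces))
      (X.cofacets σ) := by
    intro τ hτ
    simp only [lowerNeighbors, cofacets, Finset.mem_coe, Finset.mem_filter] at hτ ⊢
    obtain ⟨⟨-, hτ, hστ⟩, hU⟩ := hτ
    have := Finset.card_union_add_card_inter σ τ
    exact ⟨hU, Finset.subset_union_left, by omega⟩
  have hfiber (η : Finset V) (hη : η ∈ X.cofacets σ) :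
      (((X.lowerNeighbors n σ).filter (σ ∪ · ∈ X.faces)).filter (σ ∪ · = η)).card = n + 1 := by
    obtain ⟨-, hση, hη'⟩ := Finset.mem_filter.1 hη
    rw [filter_union_eq_erase_powersetCard hσ hη,
      Finset.card_erase_of_mem (Finset.mem_powersetCard.2 ⟨hση, hσ⟩), Finset.card_powersetCard,
      hη', hσ, Nat.choose_succ_self_right, Nat.add_sub_cancel]
  rw [Finset.card_eq_sum_card_fiberwise hmaps, Finset.sum_congr rfl hfiber, Finset.sum_const,
    smul_eq_mul, mul_comm, deg, ← cofacets]

theorem signedGraph_degree [Fintype V] (σ : X.face (n + 1)) :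
    (X.signedGraph n).degree σ =
      ((X.lowerNeighbors n σ.1).filter (σ.1 ∪ · ∉ X.faces)).card := by
  rw [← SimpleGraph.card_neighborFinset_eq_degree, SimpleGraph.neighborFinset_eq_filter,
    Finset.card_filter]
  refine (X.sum_face_eq_sum_filter (n + 1)
    fun τ => if (σ.1 ∩ τ).card = n ∧ σ.1 ∪ τ ∉ X.faces then 1 else 0).trans ?_
  rw [← Finset.card_filter, lowerNeighbors, Finset.filter_filter, Finset.filter_filter]
  simp only [and_assoc]

theorem sum_deg_erase [Fintype V] (σ : X.face (n + 1)) :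
    ∑ u ∈ σ.1, X.deg (σ.1.erase u) =
      (n + 1) + (n + 1) * X.deg σ.1 + (X.signedGraph n).degree σ := by
  rw [sum_deg_erase_eq_card_lowerNeighbors σ.2.1 σ.2.2, signedGraph_degree,
    ← card_lowerNeighbors_filter_union_mem σ.2.2,
    ← Finset.card_filter_add_card_filter_not (s := X.lowerNeighbors n σ.1) (σ.1 ∪ · ∈ X.faces)]
  ring

end Combinatorics

section Signs

variable {V : Type} [DecidableEq V] [LinearOrder V]

theorem sgn_insert_s18 {ρ : Finset V} {a : V} (ha : a ∉ ρ) :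
    sgn (insert a ρ) ρ = (-1) ^ (ρ.filter fun w => w < a).card := by
  simp [sgn, Finset.insert_sdiff_cancel ha, Finset.filter_insert]

theorem sgn_sq_of_covBy {σ τ : Finset V} (h : τ ⋖ σ) : sgn σ τ ^ 2 = 1 := by
  obtain ⟨a, ha, rfl⟩ := h.exists_finset_insert
  rw [sgn_insert_s18 ha, ← pow_mul, pow_mul', neg_one_sq, one_pow]

theorem sgn_insert_insert {ρ : Finset V} {a b : V} (ha : a ∉ ρ) (hb : b ∉ ρ) (hab : a ≠ b) :
    sgn (insert a (insert b ρ)) (insert b ρ) =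
      (-1) ^ (ρ.filter fun w => w < a).card * if b < a then -1 else 1 := by
  rw [sgn_insert_s18 (by simp [ha, hab]), Finset.filter_insert]
  split_ifs with h
  · rw [Finset.card_insert_of_notMem (by simp [hb]), pow_succ]
  · rw [mul_one]

/-- The local form of `d ∘ d = 0`. -/
theorem sgn_union_mul_add_sgn_inter_mul {σ τ : Finset V} {n : ℕ} (hσ : σ.card = n + 1)
    (hτ : τ.card = n + 1) (hστ : (σ ∩ τ).card = n) :
    sgn (σ ∪ τ) σ * sgn (σ ∪ τ) τ + sgn σ (σ ∩ τ) * sgn τ (σ ∩ τ) = 0 := by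
  obtain ⟨a, ha, hσ'⟩ := Finset.exists_eq_insert_iff.2
    ⟨Finset.inter_subset_left (s₂ := τ), (by omega : (σ ∩ τ).card + 1 = σ.card)⟩
  obtain ⟨b, hb, hτ'⟩ := Finset.exists_eq_insert_iff.2
    ⟨Finset.inter_subset_right (s₁ := σ), (by omega : (σ ∩ τ).card + 1 = τ.card)⟩
  have hab : a ≠ b := by
    rintro rfl
    exact ha (Finset.mem_inter.2
      ⟨hσ' ▸ Finset.mem_insert_self _ _, hτ' ▸ Finset.mem_insert_self _ _⟩)
  set ρ := σ ∩ τ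
  have hunion : σ ∪ τ = insert a (insert b ρ) := by
    rw [← hσ', ← hτ', Finset.insert_union, Finset.union_insert, Finset.union_self]
  rw [hunion, ← hσ', ← hτ', sgn_insert_s18 ha, sgn_insert_s18 hb, sgn_insert_insert ha hb hab,
    Finset.insert_comm, sgn_insert_insert hb ha hab.symm]
  rcases hab.lt_or_gt with h | h <;>
    simp only [h, h.not_gt, if_true, if_false, mul_neg, neg_mul, mul_one] <;> ring

variable (X : SC V) [Fintype V]

theorem CB_transpose_mul_CB_apply (m : ℕ) (σ τ : X.face m) :
    ((X.CB m)ᵀ * X.CB m) σ τ =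
      ∑ η ∈ X.faces with η.card = m + 1, if σ.1 ∪ τ.1 ⊆ η then sgn η σ.1 * sgn η τ.1 else 0 := by
  simp only [mul_apply, transpose_apply, CB, ite_zero_mul_ite_zero, Finset.union_subset_iff]
  exact X.sum_face_eq_sum_filter (m + 1)
    fun η => if σ.1 ⊆ η ∧ τ.1 ⊆ η then sgn η σ.1 * sgn η τ.1 else 0

theorem CB_mul_CB_transpose_apply (m : ℕ) (σ τ : X.face (m + 1)) :
    (X.CB m * (X.CB m)ᵀ) σ τ =
      ∑ ρ ∈ X.faces with ρ.card = m, if ρ ⊆ σ.1 ∩ τ.1 then sgn σ.1 ρ * sgn τ.1 ρ else 0 := by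
  simp only [mul_apply, transpose_apply, CB, ite_zero_mul_ite_zero, Finset.subset_inter_iff]
  exact X.sum_face_eq_sum_filter m
    fun ρ => if ρ ⊆ σ.1 ∧ ρ ⊆ τ.1 then sgn σ.1 ρ * sgn τ.1 ρ else 0

theorem CB_transpose_mul_CB_apply_self (m : ℕ) (σ : X.face m) :
    ((X.CB m)ᵀ * X.CB m) σ σ = X.deg σ.1 := by
  rw [CB_transpose_mul_CB_apply, Finset.union_self]
  calc _ = ∑ η ∈ X.faces with η.card = m + 1, if σ.1 ⊆ η then (1 : ℝ) else 0 := by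
        refine Finset.sum_congr rfl fun η hη => if_ctx_congr Iff.rfl (fun h => ?_) fun _ => rfl
        rw [← sq, sgn_sq_of_covBy (Finset.covBy_iff_subset_and_card.2
          ⟨h, by rw [σ.2.2, (Finset.mem_filter.1 hη).2]⟩)]
    _ = X.deg σ.1 := by
        rw [Finset.sum_boole, Finset.filter_filter, deg, σ.2.2]
        simp_rw [and_comm]

theorem CB_mul_CB_transpose_apply_self (m : ℕ) (σ : X.face (m + 1)) :
    (X.CB m * (X.CB m)ᵀ) σ σ = m + 1 := by
  rw [CB_mul_CB_transpose_apply, Finset.inter_self]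
  calc _ = ∑ ρ ∈ X.faces with ρ.card = m, if ρ ⊆ σ.1 then (1 : ℝ) else 0 := by
        refine Finset.sum_congr rfl fun ρ hρ => if_ctx_congr Iff.rfl (fun h => ?_) fun _ => rfl
        rw [← sq, sgn_sq_of_covBy (Finset.covBy_iff_subset_and_card.2
          ⟨h, by rw [σ.2.2, (Finset.mem_filter.1 hρ).2]⟩)]
    _ = m + 1 := by
        rw [Finset.sum_boole, Finset.filter_filter, X.filter_subset_eq_powersetCard σ.2.1,
          Finset.card_powersetCard, σ.2.2, Nat.choose_succ_self_right]
        push_cast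
        ring

theorem CB_transpose_mul_CB_apply_of_ne {m : ℕ} {σ τ : X.face m} (hστ : σ ≠ τ) :
    ((X.CB m)ᵀ * X.CB m) σ τ =
      if σ.1 ∪ τ.1 ∈ X.faces ∧ (σ.1 ∪ τ.1).card = m + 1
      then sgn (σ.1 ∪ τ.1) σ.1 * sgn (σ.1 ∪ τ.1) τ.1 else 0 := by
  have hlt : m < (σ.1 ∪ τ.1).card := by
    simpa only [σ.2.2] using
      Finset.card_lt_card_union_of_ne (Subtype.coe_ne_coe.2 hστ) (σ.2.2.trans τ.2.2.symm)
  have key (η : Finset V) (hη : η ∈ {η ∈ X.faces | η.card = m + 1}) :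
      σ.1 ∪ τ.1 ⊆ η ↔ σ.1 ∪ τ.1 = η :=
    ⟨fun h => Finset.eq_of_subset_of_card_le h ((Finset.mem_filter.1 hη).2 ▸ hlt),
      fun h => h.subset⟩
  rw [CB_transpose_mul_CB_apply, Finset.sum_congr rfl fun η hη => if_congr (key η hη) rfl rfl,
    Finset.sum_ite_eq]
  simp only [Finset.mem_filter]

theorem CB_mul_CB_transpose_apply_of_ne {m : ℕ} {σ τ : X.face (m + 1)} (hστ : σ ≠ τ) :
    (X.CB m * (X.CB m)ᵀ) σ τ =
      if (σ.1 ∩ τ.1).card = m then sgn σ.1 (σ.1 ∩ τ.1) * sgn τ.1 (σ.1 ∩ τ.1) else 0 := by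
  have hlt : (σ.1 ∩ τ.1).card < m + 1 := by
    simpa only [σ.2.2] using
      Finset.card_inter_lt_of_ne (Subtype.coe_ne_coe.2 hστ) (σ.2.2.trans τ.2.2.symm)
  have key (ρ : Finset V) (hρ : ρ ∈ {ρ ∈ X.faces | ρ.card = m}) :
      ρ ⊆ σ.1 ∩ τ.1 ↔ σ.1 ∩ τ.1 = ρ :=
    ⟨fun h => (Finset.eq_of_subset_of_card_le h (by rw [(Finset.mem_filter.1 hρ).2]; omega)).symm,
      fun h => h.symm.subset⟩
  rw [CB_mul_CB_transpose_apply, Finset.sum_congr rfl fun ρ hρ => if_congr (key ρ hρ) rfl rfl,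
    Finset.sum_ite_eq]
  simp only [Finset.mem_filter, X.down_closed σ.1 σ.2.1 _ Finset.inter_subset_left, true_and]

/-- The matrix `K_n`. -/
def bochnerMatrix (n : ℕ) : Matrix (X.face (n + 1)) (X.face (n + 1)) ℝ :=
  (X.signedGraph n).signedLapMatrix fun σ τ => sgn σ.1 (σ.1 ∩ τ.1)

theorem bochnerMatrix_apply_self {n : ℕ} (σ : X.face (n + 1)) :
    X.bochnerMatrix n σ σ = (X.signedGraph n).degree σ := by
  simp only [bochnerMatrix, SimpleGraph.signedLapMatrix, Matrix.add_apply, diagonal_apply_eq,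
    of_apply, SimpleGraph.irrefl, if_false, add_zero]
  rw [← SimpleGraph.card_neighborFinset_eq_degree, SimpleGraph.neighborFinset_eq_filter,
    Finset.natCast_card_filter]
  refine Finset.sum_congr rfl fun τ _ => if_ctx_congr Iff.rfl (fun h => ?_) fun _ => rfl
  exact sgn_sq_of_covBy (Finset.covBy_iff_subset_and_card.2
    ⟨Finset.inter_subset_left, by rw [h.1, σ.2.2]⟩)

theorem lap_apply_self {n : ℕ} (σ : X.face (n + 1)) :
    X.Lap (n + 1) σ σ = X.deg σ.1 + (n + 1) := by
  rw [Lap, Matrix.add_apply, CB_transpose_mul_CB_apply_self, CB_mul_CB_transpose_apply_self]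

theorem lap_apply_of_ne {n : ℕ} {σ τ : X.face (n + 1)} (hστ : σ ≠ τ) :
    X.Lap (n + 1) σ τ = X.bochnerMatrix n σ τ := by
  have hcard := Finset.card_union_add_card_inter σ.1 τ.1
  rw [σ.2.2, τ.2.2] at hcard
  simp only [Lap, Matrix.add_apply, CB_transpose_mul_CB_apply_of_ne X hστ,
    CB_mul_CB_transpose_apply_of_ne X hστ, bochnerMatrix, SimpleGraph.signedLapMatrix,
    diagonal_apply_ne _ hστ, of_apply, zero_add, signedGraph, Finset.inter_comm τ.1]
  by_cases hn : (σ.1 ∩ τ.1).card = n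
  · have hU : (σ.1 ∪ τ.1).card = n + 1 + 1 := by omega
    by_cases hX : σ.1 ∪ τ.1 ∈ X.faces
    · simp only [hX, hU, hn, and_self, if_true, not_true, and_false, if_false]
      exact sgn_union_mul_add_sgn_inter_mul σ.2.2 τ.2.2 hn
    · simp [hX, hn]
  · have hU : (σ.1 ∪ τ.1).card ≠ n + 1 + 1 := by omega
    simp [hU, hn]

end Signs

end SC

/-- Bochner-type decomposition of the reduced `k`-Laplacian
(`k = m - 1 ≥ 0`): `L_k = D_k + K_k` with `K_k` positive semi-definite and `D_k`
diagonal with entries `2(k+1) + (k+2)·deg(σ) - Σ_{τ ∈ σ(k-1)} deg(τ)`. -/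
theorem laplacian_decomposition {V : Type} [Fintype V] [DecidableEq V] [LinearOrder V]
    (X : SC V) (m : ℕ) (hm : 1 ≤ m) :
    ∃ K : Matrix (X.face m) (X.face m) ℝ, K.PosSemidef ∧
      X.Lap m = Matrix.diagonal (fun σ =>
        2 * (m : ℝ) + ((m : ℝ) + 1) * (X.deg σ.1 : ℝ)
          - ∑ u ∈ σ.1, (X.deg (σ.1.erase u) : ℝ)) + K := by
  obtain ⟨n, rfl⟩ : ∃ n, m = n + 1 := ⟨m - 1, by omega⟩
  refine ⟨X.bochnerMatrix n, SimpleGraph.posSemidef_signedLapMatrix _ _, ?_⟩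
  ext σ τ
  rcases eq_or_ne σ τ with rfl | hστ
  · rw [Matrix.add_apply, diagonal_apply_eq, X.lap_apply_self, X.bochnerMatrix_apply_self,
      ← Nat.cast_sum, X.sum_deg_erase]
    push_cast
    ring
  · rw [Matrix.add_apply, diagonal_apply_ne _ hστ, zero_add, X.lap_apply_of_ne hστ]
end
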